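/- For any left-invariant total order ≺ on the Klein bottle group K = ⟨a, b | a b a⁻¹ = b⁻¹⟩, every element of the subgroup ⟨b⟩ is less than max_≺{a, a⁻¹}. -/

import Mathlib

/-- The single relator `a b a⁻¹ b` of the Klein bottle group `⟨a, b ∣ a b a⁻¹ = b⁻¹⟩`,
with `a = FreeGroup.of 0` and `b = FreeGroup.of 1`. -/
def kleinRels : Set (FreeGroup (Fin 2)) :=
  {FreeGroup.of 0 * FreeGroup.of 1 * (FreeGroup.of 0)⁻¹ * FreeGroup.of 1}

/-- The Klein bottle group `K = ⟨a, b ∣ a b a⁻¹ = b⁻¹⟩`. -/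
abbrev KleinGroup : Type := PresentedGroup kleinRels

/-- The generator `a` of the Klein bottle group. -/
def Ka : KleinGroup := PresentedGroup.of 0

/-- The generator `b` of the Klein bottle group. -/
def Kb : KleinGroup := PresentedGroup.of 1

lemma klein_rel : Ka * Kb * Ka⁻¹ * Kb = 1 := by
  have hmem : FreeGroup.of (0 : Fin 2) * FreeGroup.of 1 * (FreeGroup.of 0)⁻¹ * FreeGroup.of 1 ∈
      Subgroup.normalClosure kleinRels :=
    Subgroup.subset_normalClosure rfl
  have : (QuotientGroup.mk (FreeGroup.of (0 : Fin 2) * FreeGroup.of 1 * (FreeGroup.of 0)⁻¹ *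
      FreeGroup.of 1) : KleinGroup) = 1 := (QuotientGroup.eq_one_iff _).2 hmem
  simp only [Ka, Kb, PresentedGroup.of, ← map_inv, ← map_mul]
  exact this

lemma klein_conj (n : ℤ) : Ka * Kb ^ n * Ka⁻¹ = (Kb ^ n)⁻¹ := by
  have h1 : Ka * Kb * Ka⁻¹ = Kb⁻¹ := mul_eq_one_iff_eq_inv.mp klein_rel
  calc Ka * Kb ^ n * Ka⁻¹ = (MulAut.conj Ka) (Kb ^ n) := by simp [MulAut.conj]
    _ = ((MulAut.conj Ka) Kb) ^ n := by rw [map_zpow]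
    _ = (Kb⁻¹) ^ n := by rw [show (MulAut.conj Ka) Kb = Kb⁻¹ by simpa [MulAut.conj] using h1]
    _ = (Kb ^ n)⁻¹ := by group

/-- The homomorphism `K → ℤ` sending `a ↦ 1`, `b ↦ 0`. -/
def kleinPhi : KleinGroup →* Multiplicative ℤ :=
  PresentedGroup.toGroup (f := fun i : Fin 2 => if i = 0 then Multiplicative.ofAdd 1 else 1)
    (by
      intro rl hrl
      rw [Set.mem_singleton_iff.1 hrl]
      simp)

lemma kleinPhi_a : kleinPhi Ka = Multiplicative.ofAdd 1 := by
  simpa [kleinPhi, Ka] using PresentedGroup.toGroup.of (rels := kleinRels)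
    (f := fun i : Fin 2 => if i = 0 then Multiplicative.ofAdd 1 else 1) _ (x := 0)

lemma kleinPhi_b : kleinPhi Kb = 1 := by
  simpa [kleinPhi, Kb] using PresentedGroup.toGroup.of (rels := kleinRels)
    (f := fun i : Fin 2 => if i = 0 then Multiplicative.ofAdd 1 else 1) _ (x := 1)

lemma klein_bn_ne_a (n : ℤ) : Kb ^ n ≠ Ka := by
  intro h
  have := congrArg kleinPhi h
  rw [map_zpow, kleinPhi_b, kleinPhi_a, one_zpow] at this
  exact absurd (congrArg Multiplicative.toAdd this) (by simp)

lemma klein_bn_ne_ainv (n : ℤ) : Kb ^ n ≠ Ka⁻¹ := by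
  intro h
  have := congrArg kleinPhi h
  rw [map_zpow, kleinPhi_b, map_inv, kleinPhi_a, one_zpow] at this
  exact absurd (congrArg Multiplicative.toAdd this) (by simp)

/-- For any left-invariant total order `≺` on the Klein bottle group, every element of the
subgroup `⟨b⟩` is less than `max_≺ {a, a⁻¹}` (i.e. less than `a` if `a⁻¹ ≺ a`, and less
than `a⁻¹` if `a ≺ a⁻¹`). -/
theorem klein_zpowers_b_lt_max (r : KleinGroup → KleinGroup → Prop)
    (hr : IsStrictTotalOrder KleinGroup r)
    (hinv : ∀ g x y : KleinGroup, r x y → r (g * x) (g * y)) :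
    ∀ g ∈ Subgroup.zpowers Kb, (r Ka⁻¹ Ka → r g Ka) ∧ (r Ka Ka⁻¹ → r g Ka⁻¹) := by
  haveI := hr
  rintro g ⟨n, rfl⟩
  constructor
  · intro h
    rcases trichotomous_of r (Kb ^ n) Ka with hlt | heq | hgt
    · exact hlt
    · exact absurd heq (klein_bn_ne_a n)
    · -- r Ka (Kb ^ n) : derive contradiction
      exfalso
      have h1 : r 1 (Ka⁻¹ * Kb ^ n) := by
        have := hinv Ka⁻¹ _ _ hgt
        simpa using this
      have h2 : r (Ka⁻¹ * Kb ^ n) ((Ka⁻¹ * Kb ^ n) * (Ka⁻¹ * Kb ^ n)) := by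
        have := hinv (Ka⁻¹ * Kb ^ n) _ _ h1
        simpa using this
      have hsq : (Ka⁻¹ * Kb ^ n) * (Ka⁻¹ * Kb ^ n) = Ka⁻¹ * Ka⁻¹ := by
        have hc : Kb ^ n * Ka⁻¹ = Ka⁻¹ * (Kb ^ n)⁻¹ := by
          rw [← klein_conj n]; group
        calc (Ka⁻¹ * Kb ^ n) * (Ka⁻¹ * Kb ^ n)
            = Ka⁻¹ * (Kb ^ n * Ka⁻¹) * Kb ^ n := by group
          _ = Ka⁻¹ * (Ka⁻¹ * (Kb ^ n)⁻¹) * Kb ^ n := by rw [hc]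
          _ = Ka⁻¹ * Ka⁻¹ := by group
      rw [hsq] at h2
      have h3 : r 1 (Ka⁻¹ * Ka⁻¹) := _root_.trans h1 h2
      have h4 : r (Ka⁻¹ * Ka⁻¹) 1 := by
        have := hinv Ka⁻¹ _ _ h
        simpa using this
      exact irrefl_of r 1 (_root_.trans h3 h4)
  · intro h
    rcases trichotomous_of r (Kb ^ n) Ka⁻¹ with hlt | heq | hgt
    · exact hlt
    · exact absurd heq (klein_bn_ne_ainv n)
    · exfalso
      have h1 : r 1 (Ka * Kb ^ n) := by
        have := hinv Ka _ _ hgt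
        simpa using this
      have h2 : r (Ka * Kb ^ n) ((Ka * Kb ^ n) * (Ka * Kb ^ n)) := by
        have := hinv (Ka * Kb ^ n) _ _ h1
        simpa using this
      have hsq : (Ka * Kb ^ n) * (Ka * Kb ^ n) = Ka * Ka := by
        have hc : Kb ^ n * Ka = Ka * (Kb ^ n)⁻¹ := by
          have := klein_conj (-n)
          rw [zpow_neg, inv_inv] at this
          calc Kb ^ n * Ka = (Ka * (Kb ^ n)⁻¹ * Ka⁻¹) * Ka := by rw [this]
            _ = Ka * (Kb ^ n)⁻¹ := by simp [mul_assoc]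
        calc (Ka * Kb ^ n) * (Ka * Kb ^ n)
            = Ka * (Kb ^ n * Ka) * Kb ^ n := by group
          _ = Ka * (Ka * (Kb ^ n)⁻¹) * Kb ^ n := by rw [hc]
          _ = Ka * Ka := by group
      rw [hsq] at h2
      have h3 : r 1 (Ka * Ka) := _root_.trans h1 h2
      have h4 : r (Ka * Ka) 1 := by
        have := hinv Ka _ _ h
        simpa using this
      exact irrefl_of r 1 (_root_.trans h3 h4)
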